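/- Let Ω ⊂ ℝⁿ be open bounded and A ∈ L^2(Ω×Ω) a strictly positive definite symmetric kernel. If a sequence u_k ∈ C_c^∞(Ω;ℝⁿ) converges weakly to 0 in H^1_0(Ω;ℝⁿ), then ‖u_k‖_A → 0, where ‖u‖_A² = ∫_Ω∫_Ω A(x,x')∇u(x):∇u(x')dx'dx. Consequently H^1_0(Ω;ℝⁿ) is compactly embedded in the completion V_A. -/

import Mathlib

open MeasureTheory Filter

noncomputable section

/-- The Jacobian matrix of a vector field on ℝⁿ. -/
def jac {n : ℕ} (u : EuclideanSpace ℝ (Fin n) → EuclideanSpace ℝ (Fin n))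
    (x : EuclideanSpace ℝ (Fin n)) : Matrix (Fin n) (Fin n) ℝ :=
  fun k m => fderiv ℝ u x (EuclideanSpace.single m 1) k

/-- The Frobenius inner product of two matrices. -/
def frob {n : ℕ} (A B : Matrix (Fin n) (Fin n) ℝ) : ℝ := ∑ k, ∑ m, A k m * B k m

/-- Smooth compactly supported vector field with support inside Ω. -/
def IsTestVF {n : ℕ} (Ω : Set (EuclideanSpace ℝ (Fin n)))
    (u : EuclideanSpace ℝ (Fin n) → EuclideanSpace ℝ (Fin n)) : Prop :=
  ContDiff ℝ (⊤ : ℕ∞) u ∧ HasCompactSupport u ∧ tsupport u ⊆ Ω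


-- Generic Hilbert space lemma: bounded sequence pairing → 0 on a set extends to closure of span.
theorem weak_tendsto_of_span_closure {W : Type*} [NormedAddCommGroup W]
    [InnerProductSpace ℝ W] {x : ℕ → W} {C : ℝ} (hC : ∀ k, ‖x k‖ ≤ C)
    {S : Set W} (hS : ∀ v ∈ S, Tendsto (fun k => (inner ℝ (x k) v : ℝ)) atTop (nhds 0))
    {w : W} (hw : w ∈ (Submodule.span ℝ S).topologicalClosure) :
    Tendsto (fun k => (inner ℝ (x k) w : ℝ)) atTop (nhds 0) := by
  have hC0 : 0 ≤ C := le_trans (norm_nonneg _) (hC 0)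
  have hspan : ∀ v ∈ Submodule.span ℝ S, Tendsto (fun k => (inner ℝ (x k) v : ℝ)) atTop (nhds 0) := by
    intro v hv
    induction hv using Submodule.span_induction with
    | mem v hv => exact hS v hv
    | zero => simpa using tendsto_const_nhds
    | add v w _ _ hv hw => simpa [inner_add_right] using hv.add hw
    | smul a v _ hv => simpa [inner_smul_right] using hv.const_mul a
  rw [Metric.tendsto_atTop]
  intro ε hε
  have hwc : w ∈ closure ((Submodule.span ℝ S : Submodule ℝ W) : Set W) := hw
  rw [Metric.mem_closure_iff] at hwc
  obtain ⟨v, hvmem, hvd⟩ := hwc (ε / (2 * (C + 1))) (by positivity)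
  have h1 := hspan v hvmem
  rw [Metric.tendsto_atTop] at h1
  obtain ⟨N, hN⟩ := h1 (ε / 2) (by positivity)
  refine ⟨N, fun k hk => ?_⟩
  have h2 := hN k hk
  simp only [Real.dist_eq, sub_zero] at h2 ⊢
  have : (inner ℝ (x k) w : ℝ) = inner ℝ (x k) v + inner ℝ (x k) (w - v) := by
    rw [← inner_add_right, add_sub_cancel]
  rw [this]
  calc |(inner ℝ (x k) v : ℝ) + inner ℝ (x k) (w - v)|
      ≤ |(inner ℝ (x k) v : ℝ)| + |(inner ℝ (x k) (w - v) : ℝ)| := abs_add_le _ _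
    _ < ε / 2 + ε / 2 := by
        refine add_lt_add h2 (lt_of_le_of_lt (abs_real_inner_le_norm _ _) ?_)
        have h3 : ‖w - v‖ < ε / (2 * (C + 1)) := by
          rw [← dist_eq_norm]; exact hvd
        calc ‖x k‖ * ‖w - v‖ ≤ C * ‖w - v‖ := by
              exact mul_le_mul_of_nonneg_right (hC k) (norm_nonneg _)
          _ ≤ (C + 1) * ‖w - v‖ := by nlinarith [norm_nonneg (w - v)]
          _ < (C + 1) * (ε / (2 * (C + 1))) := by
              exact mul_lt_mul_of_pos_left h3 (by positivity)
          _ = ε / 2 := by field_simp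
    _ = ε := by ring

theorem weak_tendsto_all {W : Type*} [NormedAddCommGroup W]
    [InnerProductSpace ℝ W] [CompleteSpace W] {x : ℕ → W} {C : ℝ} (hC : ∀ k, ‖x k‖ ≤ C)
    {S : Set W} (hxS : ∀ k, x k ∈ S)
    (hS : ∀ v ∈ S, Tendsto (fun k => (inner ℝ (x k) v : ℝ)) atTop (nhds 0))
    (w : W) : Tendsto (fun k => (inner ℝ (x k) w : ℝ)) atTop (nhds 0) := by
  set K := (Submodule.span ℝ S).topologicalClosure with hK
  haveI : CompleteSpace K := (Submodule.isClosed_topologicalClosure _).completeSpace_coe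
  have hproj : ∀ k, (inner ℝ (x k) w : ℝ) = inner ℝ (x k) ((K.orthogonalProjectionOnto w : W)) := by
    intro k
    have hmemK : x k ∈ K :=
      (Submodule.le_topologicalClosure _) (Submodule.subset_span (hxS k))
    have horth : w - (K.orthogonalProjectionOnto w : W) ∈ Kᗮ :=
      Submodule.sub_starProjection_mem_orthogonal (K := K) w
    have h0 : (inner ℝ (x k) (w - (K.orthogonalProjectionOnto w : W)) : ℝ) = 0 :=
      (Submodule.mem_orthogonal K _).mp horth (x k) hmemK
    have := inner_sub_right (𝕜 := ℝ) (x k) w (K.orthogonalProjectionOnto w : W)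
    rw [h0] at this
    linarith [this]
  simp only [hproj]
  exact weak_tendsto_of_span_closure hC hS (K.orthogonalProjectionOnto w).2

theorem memL2_integrable_mul {α : Type*} [MeasurableSpace α] {μ : Measure α} {f g : α → ℝ}
    (hf : MemLp f 2 μ) (hg : MemLp g 2 μ) : Integrable (fun x => f x * g x) μ := by
  have h := L2.integrable_inner (𝕜 := ℝ) (hf.toLp f) (hg.toLp g)
  refine h.congr ?_
  filter_upwards [hf.coeFn_toLp, hg.coeFn_toLp] with x h1 h2
  simp [h1, h2, RCLike.inner_apply, mul_comm]

theorem integral_cs {α : Type*} [MeasurableSpace α] {μ : Measure α} {f g : α → ℝ}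
    (hf : MemLp f 2 μ) (hg : MemLp g 2 μ) :
    |∫ x, f x * g x ∂μ| ≤ Real.sqrt (∫ x, f x ^ 2 ∂μ) * Real.sqrt (∫ x, g x ^ 2 ∂μ) := by
  set F := hf.toLp f
  set G := hg.toLp g
  have hFG : (inner ℝ F G : ℝ) = ∫ x, f x * g x ∂μ := by
    rw [L2.inner_def]
    refine integral_congr_ae ?_
    filter_upwards [hf.coeFn_toLp, hg.coeFn_toLp] with x h1 h2
    simp [h1, h2, RCLike.inner_apply, F, G, mul_comm]
  have hFF : (inner ℝ F F : ℝ) = ∫ x, f x ^ 2 ∂μ := by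
    rw [L2.inner_def]
    refine integral_congr_ae ?_
    filter_upwards [hf.coeFn_toLp] with x h1
    simp [h1, RCLike.inner_apply, sq, F]
  have hGG : (inner ℝ G G : ℝ) = ∫ x, g x ^ 2 ∂μ := by
    rw [L2.inner_def]
    refine integral_congr_ae ?_
    filter_upwards [hg.coeFn_toLp] with x h1
    simp [h1, RCLike.inner_apply, sq, G]
  have hn : ‖F‖ = Real.sqrt (∫ x, f x ^ 2 ∂μ) := by
    rw [@norm_eq_sqrt_real_inner, hFF]
  have hn' : ‖G‖ = Real.sqrt (∫ x, g x ^ 2 ∂μ) := by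
    rw [@norm_eq_sqrt_real_inner, hGG]
  rw [← hFG, ← hn, ← hn']
  exact abs_real_inner_le_norm F G





variable {n : ℕ}

abbrev Esp (n : ℕ) := EuclideanSpace ℝ (Fin n)
abbrev Msp (n : ℕ) := EuclideanSpace ℝ (Fin n × Fin n)

/-- jacobian as an `Msp`-valued map -/
def jmat (u : Esp n → Esp n) (x : Esp n) : Msp n :=
  WithLp.toLp 2 (fun p : Fin n × Fin n => jac u x p.1 p.2)

theorem jmat_continuous {u : Esp n → Esp n} (hu : ContDiff ℝ (⊤ : ℕ∞) u) : Continuous (jmat u) := by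
  have h1 : Continuous (fderiv ℝ u) := (hu.continuous_fderiv (by simp))
  refine (PiLp.continuous_toLp _ _).comp (continuous_pi fun p => ?_)
  exact (continuous_apply p.1).comp ((PiLp.continuous_ofLp _ _).comp (h1.clm_apply continuous_const))

theorem jmat_support {u : Esp n → Esp n} (hu : HasCompactSupport u) :
    HasCompactSupport (jmat u) := by
  refine HasCompactSupport.mono' (hu.fderiv (𝕜 := ℝ)) ?_
  intro x hx
  contrapose! hx
  have hx0 : fderiv ℝ u x = 0 := image_eq_zero_of_notMem_tsupport hx
  simp only [Function.mem_support, ne_eq, not_not]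
  ext p
  simp [jmat, jac, hx0]

theorem test_continuous {Ω : Set (Esp n)} {u : Esp n → Esp n} (hu : IsTestVF Ω u) :
    Continuous u := hu.1.continuous

theorem memL2_jmat {Ω : Set (Esp n)} [IsFiniteMeasureOnCompacts (volume.restrict Ω : Measure (Esp n))]
    {u : Esp n → Esp n} (hu : IsTestVF Ω u) :
    MemLp (jmat u) 2 (volume.restrict Ω) :=
  (jmat_continuous hu.1).memLp_of_hasCompactSupport (jmat_support hu.2.1)

theorem memL2_self {Ω : Set (Esp n)} [IsFiniteMeasureOnCompacts (volume.restrict Ω : Measure (Esp n))]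
    {u : Esp n → Esp n} (hu : IsTestVF Ω u) :
    MemLp u 2 (volume.restrict Ω) :=
  hu.1.continuous.memLp_of_hasCompactSupport hu.2.1

section Wspace
variable {Ω : Set (Esp n)}

/-- ambient Hilbert space: L² pairs (function, jacobian). -/
abbrev Wsp (μ : Measure (Esp n)) := WithLp 2 ((Lp (Esp n) 2 μ) × (Lp (Msp n) 2 μ))

variable [IsFiniteMeasureOnCompacts (volume.restrict Ω : Measure (Esp n))]

example : CompleteSpace (Wsp (n := n) (volume.restrict Ω)) := inferInstance
example : InnerProductSpace ℝ (Wsp (n := n) (volume.restrict Ω)) := inferInstance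

def mkW {u : Esp n → Esp n} (hu : IsTestVF Ω u) : Wsp (n := n) (volume.restrict Ω) :=
  (WithLp.equiv 2 _).symm ((memL2_self hu).toLp u, (memL2_jmat hu).toLp (jmat u))

theorem frob_eq_sum_prod (P Q : Matrix (Fin n) (Fin n) ℝ) :
    frob P Q = ∑ p : Fin n × Fin n, P p.1 p.2 * Q p.1 p.2 := by
  rw [frob, Fintype.sum_prod_type]

theorem inner_jmat_eq {u v : Esp n → Esp n} (x : Esp n) :
    (inner ℝ (jmat u x) (jmat v x) : ℝ) = frob (jac u x) (jac v x) := by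
  rw [frob_eq_sum_prod, PiLp.inner_apply]
  simp [jmat, RCLike.inner_apply, mul_comm]

theorem inner_mkW {u v : Esp n → Esp n} (hu : IsTestVF Ω u) (hv : IsTestVF Ω v) :
    (inner ℝ (mkW hu) (mkW hv) : ℝ) =
      (∫ x in Ω, ∑ i, u x i * v x i) + ∫ x in Ω, frob (jac u x) (jac v x) := by
  rw [mkW, mkW, WithLp.prod_inner_apply]
  congr 1
  · simp only [WithLp.equiv_symm_apply, WithLp.ofLp_toLp]
    rw [L2.inner_def]
    refine integral_congr_ae ?_
    filter_upwards [(memL2_self hu).coeFn_toLp, (memL2_self hv).coeFn_toLp] with x h1 h2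
    rw [h1, h2, PiLp.inner_apply]
    simp [RCLike.inner_apply, mul_comm]
  · simp only [WithLp.equiv_symm_apply, WithLp.ofLp_toLp]
    rw [L2.inner_def]
    refine integral_congr_ae ?_
    filter_upwards [(memL2_jmat hu).coeFn_toLp, (memL2_jmat hv).coeFn_toLp] with x h1 h2
    rw [h1, h2, inner_jmat_eq]

theorem inner_mkW_self {u : Esp n → Esp n} (hu : IsTestVF Ω u) :
    (inner ℝ (mkW hu) (mkW hu) : ℝ) =
      (∫ x in Ω, ‖u x‖ ^ 2) + ∫ x in Ω, frob (jac u x) (jac u x) := by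
  rw [inner_mkW hu hu]
  congr 1
  refine integral_congr_ae (Eventually.of_forall fun x => ?_)
  simp only
  rw [← real_inner_self_eq_norm_sq, PiLp.inner_apply]
  simp [RCLike.inner_apply, sq]

/-- pairing of the jacobian part with an arbitrary L² matrix field. -/
theorem inner_mkW_right {u : Esp n → Esp n} (hu : IsTestVF Ω u)
    (G : Lp (Msp n) 2 (volume.restrict Ω)) :
    (inner ℝ (mkW hu) ((WithLp.equiv 2 _).symm (0, G)) : ℝ)
      = ∫ x in Ω, (inner ℝ (jmat u x) (G x) : ℝ) := by
  rw [mkW, WithLp.prod_inner_apply]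
  simp only [WithLp.equiv_symm_apply, WithLp.ofLp_toLp]
  rw [inner_zero_right, zero_add, L2.inner_def]
  refine integral_congr_ae ?_
  filter_upwards [(memL2_jmat hu).coeFn_toLp] with x h1
  rw [h1]

end Wspace

section Weak
variable {Ω : Set (Esp n)} [IsFiniteMeasureOnCompacts (volume.restrict Ω : Measure (Esp n))]
variable {u : ℕ → Esp n → Esp n}

theorem jac_weak_L2 (hu : ∀ k, IsTestVF Ω (u k)) {M : ℝ}
    (hbdd : ∀ k,
      (∫ x in Ω, ‖u k x‖ ^ 2) + (∫ x in Ω, frob (jac (u k) x) (jac (u k) x)) ≤ M)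
    (hweak : ∀ v : Esp n → Esp n, IsTestVF Ω v →
      Tendsto (fun k =>
        (∫ x in Ω, ∑ i, u k x i * v x i) + ∫ x in Ω, frob (jac (u k) x) (jac v x))
        atTop (nhds 0))
    (G : Lp (Msp n) 2 (volume.restrict Ω)) :
    Tendsto (fun k => ∫ x in Ω, (inner ℝ (jmat (u k) x) (G x) : ℝ)) atTop (nhds 0) := by
  classical
  set S : Set (Wsp (n := n) (volume.restrict Ω)) :=
    {w | ∃ v, ∃ hv : IsTestVF Ω v, w = mkW hv} with hSdef
  have hxS : ∀ k, mkW (hu k) ∈ S := fun k => ⟨u k, hu k, rfl⟩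
  have hC : ∀ k, ‖mkW (hu k)‖ ≤ Real.sqrt (max M 0) := by
    intro k
    have h1 : ‖mkW (hu k)‖ ^ 2 = (inner ℝ (mkW (hu k)) (mkW (hu k)) : ℝ) :=
      (real_inner_self_eq_norm_sq _).symm
    have h2 : ‖mkW (hu k)‖ ^ 2 ≤ max M 0 := by
      rw [h1, inner_mkW_self]
      exact le_trans (hbdd k) (le_max_left _ _)
    have := Real.sqrt_le_sqrt h2
    rwa [Real.sqrt_sq (norm_nonneg _)] at this
  have hS : ∀ w ∈ S, Tendsto (fun k => (inner ℝ (mkW (hu k)) w : ℝ)) atTop (nhds 0) := by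
    rintro w ⟨v, hv, rfl⟩
    have := hweak v hv
    refine this.congr fun k => ?_
    rw [inner_mkW]
  have := weak_tendsto_all hC hxS hS ((WithLp.equiv 2 _).symm (0, G))
  refine this.congr fun k => ?_
  rw [inner_mkW_right]

theorem jac_weak_scalar (hu : ∀ k, IsTestVF Ω (u k)) {M : ℝ}
    (hbdd : ∀ k,
      (∫ x in Ω, ‖u k x‖ ^ 2) + (∫ x in Ω, frob (jac (u k) x) (jac (u k) x)) ≤ M)
    (hweak : ∀ v : Esp n → Esp n, IsTestVF Ω v →
      Tendsto (fun k =>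
        (∫ x in Ω, ∑ i, u k x i * v x i) + ∫ x in Ω, frob (jac (u k) x) (jac v x))
        atTop (nhds 0))
    {h : Esp n → ℝ} (hh : MemLp h 2 (volume.restrict Ω)) (p : Fin n × Fin n) :
    Tendsto (fun k => ∫ x in Ω, jac (u k) x p.1 p.2 * h x) atTop (nhds 0) := by
  set G : Lp (Msp n) 2 (volume.restrict Ω) :=
    (ContinuousLinearMap.toSpanSingleton ℝ
      (EuclideanSpace.single p (1 : ℝ))).compLp (hh.toLp h) with hGdef
  have hG : ∀ᵐ x ∂(volume.restrict Ω), G x = h x • EuclideanSpace.single p (1 : ℝ) := by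
    filter_upwards [(ContinuousLinearMap.toSpanSingleton ℝ
      (EuclideanSpace.single p (1 : ℝ))).coeFn_compLp (hh.toLp h), hh.coeFn_toLp] with x h1 h2
    rw [h1, h2, ContinuousLinearMap.toSpanSingleton_apply]
  have := jac_weak_L2 hu hbdd hweak G
  refine this.congr fun k => ?_
  refine integral_congr_ae ?_
  filter_upwards [hG] with x h1
  rw [h1, real_inner_smul_right, EuclideanSpace.inner_single_right]
  simp only [jmat, map_one, one_mul, conj_trivial]
  ring

end Weak


/-- If `u_k → 0` weakly in `H¹₀(Ω;ℝⁿ)` then `‖u_k‖_A → 0`; consequently `H¹₀(Ω;ℝⁿ)` is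
compactly embedded in the completion `V_A`. -/
theorem H10_compactly_embedded_in_VA
    {n : ℕ} (Ω : Set (EuclideanSpace ℝ (Fin n)))
    (hΩo : IsOpen Ω) (hΩb : Bornology.IsBounded Ω)
    (A : EuclideanSpace ℝ (Fin n) → EuclideanSpace ℝ (Fin n) → ℝ)
    (hA2 : MemLp (fun p : EuclideanSpace ℝ (Fin n) × EuclideanSpace ℝ (Fin n) => A p.1 p.2) 2
      ((volume.restrict Ω).prod (volume.restrict Ω)))
    (hAsym : ∀ x y, A x y = A y x)
    (hpd : ∀ φ : EuclideanSpace ℝ (Fin n) → ℝ, ContDiff ℝ (⊤ : ℕ∞) φ → HasCompactSupport φ →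
      tsupport φ ⊆ Ω → φ ≠ 0 →
      0 < ∫ x in Ω, ∫ y in Ω, A x y * φ x * φ y)
    (u : ℕ → EuclideanSpace ℝ (Fin n) → EuclideanSpace ℝ (Fin n))
    (hu : ∀ k, IsTestVF Ω (u k))
    -- the sequence is bounded in `H¹₀(Ω;ℝⁿ)` ...
    (hbdd : ∃ M : ℝ, ∀ k,
      (∫ x in Ω, ‖u k x‖ ^ 2) + (∫ x in Ω, frob (jac (u k) x) (jac (u k) x)) ≤ M)
    -- ... and converges weakly to 0 against every test function, i.e. `u_k ⇀ 0` in `H¹₀`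
    (hweak : ∀ v : EuclideanSpace ℝ (Fin n) → EuclideanSpace ℝ (Fin n), IsTestVF Ω v →
      Tendsto (fun k =>
        (∫ x in Ω, ∑ i, u k x i * v x i) + ∫ x in Ω, frob (jac (u k) x) (jac v x))
        atTop (nhds 0)) :
    Tendsto (fun k => ∫ x in Ω, ∫ y in Ω, A x y * frob (jac (u k) x) (jac (u k) y))
      atTop (nhds 0) := by
  classical
  obtain ⟨M, hbdd⟩ := hbdd
  set μ : Measure (Esp n) := volume.restrict Ω with hμdef
  haveI hfin : IsFiniteMeasure μ := ⟨by rw [Measure.restrict_apply_univ]; exact hΩb.measure_lt_top⟩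
  set M0 : ℝ := max M 0 with hM0def
  have hM0 : (0:ℝ) ≤ M0 := le_max_right _ _
  -- the scalar entry functions
  set g : ℕ → Fin n × Fin n → Esp n → ℝ := fun k p y => jac (u k) y p.1 p.2 with hgdef
  have hgmem : ∀ k p, MemLp (g k p) 2 μ := by
    intro k p
    have h := (memL2_jmat (hu k)).const_inner (𝕜 := ℝ) (EuclideanSpace.single p (1 : ℝ))
    refine h.ae_eq (Eventually.of_forall fun x => ?_)
    rw [EuclideanSpace.inner_single_left]
    simp [jmat, hgdef]
  have hgcont : ∀ k p, Continuous (g k p) := by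
    intro k p
    exact (PiLp.continuous_apply _ _ p).comp (jmat_continuous (hu k).1)
  -- bound on entry L² norms
  have hfrob_int : ∀ k, Integrable (fun x => frob (jac (u k) x) (jac (u k) x)) μ := by
    intro k
    have : (fun x => frob (jac (u k) x) (jac (u k) x))
        = fun x => ∑ p : Fin n × Fin n, (g k p x) ^ 2 := by
      funext x; rw [frob_eq_sum_prod]
      exact Finset.sum_congr rfl fun p _ => by simp only [hgdef]; ring
    rw [this]
    exact integrable_finset_sum _ fun p _ => (hgmem k p).integrable_sq
  have hg2 : ∀ k p, ∫ x, (g k p x) ^ 2 ∂μ ≤ M0 := by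
    intro k p
    have h1 : ∫ x, (g k p x) ^ 2 ∂μ ≤ ∫ x, frob (jac (u k) x) (jac (u k) x) ∂μ := by
      refine integral_mono ((hgmem k p).integrable_sq) (hfrob_int k) fun x => ?_
      rw [frob_eq_sum_prod]
      have := Finset.single_le_sum (f := fun q : Fin n × Fin n => jac (u k) x q.1 q.2 * jac (u k) x q.1 q.2)
        (fun q _ => mul_self_nonneg _) (Finset.mem_univ p)
      calc (g k p x) ^ 2 = jac (u k) x p.1 p.2 * jac (u k) x p.1 p.2 := by
            simp only [hgdef]; ring
        _ ≤ _ := this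
    have h2 : (0:ℝ) ≤ ∫ x in Ω, ‖u k x‖ ^ 2 :=
      integral_nonneg fun x => by positivity
    have h3 := hbdd k
    calc ∫ x, (g k p x) ^ 2 ∂μ ≤ ∫ x, frob (jac (u k) x) (jac (u k) x) ∂μ := h1
      _ ≤ M := by rw [hμdef]; linarith
      _ ≤ M0 := le_max_left _ _
  -- measurability of A and slices
  haveI : IsFiniteMeasureOnCompacts (volume.restrict Ω : Measure (Esp n)) := by
    rw [← hμdef]; infer_instance
  have hA_aesm : AEStronglyMeasurable (fun q : Esp n × Esp n => A q.1 q.2) (μ.prod μ) :=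
    hA2.aestronglyMeasurable
  have hAsq_int : Integrable (fun q : Esp n × Esp n => (A q.1 q.2) ^ 2) (μ.prod μ) :=
    (memLp_two_iff_integrable_sq hA_aesm).mp hA2
  have hslice_aesm : ∀ᵐ x ∂μ, AEStronglyMeasurable (fun y => A x y) μ := by
    have hBA := Measure.ae_ae_eq_curry_of_prod (hA_aesm.ae_eq_mk)
    filter_upwards [hBA] with x hx
    exact ((hA_aesm.stronglyMeasurable_mk.comp_measurable
      measurable_prodMk_left).aestronglyMeasurable).congr hx.symm
  have hslice : ∀ᵐ x ∂μ, MemLp (fun y => A x y) 2 μ := by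
    filter_upwards [hslice_aesm, hAsq_int.prod_right_ae] with x h1 h2
    exact (memLp_two_iff_integrable_sq h1).mpr h2
  -- the auxiliary functions w
  set w : ℕ → Fin n × Fin n → Esp n → ℝ :=
    fun k p x => ∫ y, A x y * g k p y ∂μ with hwdef
  have hw_aesm : ∀ k p, AEStronglyMeasurable (w k p) μ := by
    intro k p
    exact (hA_aesm.mul
      (((hgcont k p).comp continuous_snd).aestronglyMeasurable)).integral_prod_right'
  have hw_sq_aesm : ∀ k p, AEStronglyMeasurable (fun x => (w k p x) ^ 2) μ := by
    intro k p
    have := (hw_aesm k p).mul (hw_aesm k p)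
    refine this.congr (Eventually.of_forall fun x => ?_)
    simp [sq]
  have hwb : ∀ k p, ∀ᵐ x ∂μ, (w k p x) ^ 2 ≤ (∫ y, (A x y) ^ 2 ∂μ) * M0 := by
    intro k p
    filter_upwards [hslice] with x hx
    have h1 := integral_cs hx (hgmem k p)
    have ha : (0:ℝ) ≤ ∫ y, (A x y) ^ 2 ∂μ := integral_nonneg fun y => sq_nonneg _
    have hb : (0:ℝ) ≤ ∫ y, (g k p y) ^ 2 ∂μ := integral_nonneg fun y => sq_nonneg _
    have h2 : (w k p x) ^ 2 ≤ (Real.sqrt (∫ y, (A x y) ^ 2 ∂μ)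
        * Real.sqrt (∫ y, (g k p y) ^ 2 ∂μ)) ^ 2 := by
      rw [← sq_abs]
      exact pow_le_pow_left₀ (abs_nonneg _) h1 2
    calc (w k p x) ^ 2
        ≤ (Real.sqrt (∫ y, (A x y) ^ 2 ∂μ) * Real.sqrt (∫ y, (g k p y) ^ 2 ∂μ)) ^ 2 := h2
      _ = (∫ y, (A x y) ^ 2 ∂μ) * (∫ y, (g k p y) ^ 2 ∂μ) := by
          rw [mul_pow, Real.sq_sqrt ha, Real.sq_sqrt hb]
      _ ≤ (∫ y, (A x y) ^ 2 ∂μ) * M0 := mul_le_mul_of_nonneg_left (hg2 k p) ha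
  have hbound_int : Integrable (fun x => (∫ y, (A x y) ^ 2 ∂μ) * M0) μ :=
    (hAsq_int.integral_prod_left).mul_const M0
  have hwmem : ∀ k p, MemLp (w k p) 2 μ := by
    intro k p
    refine (memLp_two_iff_integrable_sq (hw_aesm k p)).mpr ?_
    refine Integrable.mono' hbound_int (hw_sq_aesm k p) ?_
    filter_upwards [hwb k p] with x hx
    rwa [Real.norm_eq_abs, abs_of_nonneg (sq_nonneg _)]
  -- dominated convergence
  have hDCT : ∀ p, Tendsto (fun k => ∫ x, (w k p x) ^ 2 ∂μ) atTop (nhds 0) := by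
    intro p
    have h0 : (∫ x, (0:ℝ) ∂μ) = 0 := integral_zero _ _
    have := tendsto_integral_of_dominated_convergence
      (μ := μ) (F := fun k x => (w k p x) ^ 2) (f := fun _ => (0:ℝ))
      (fun x => (∫ y, (A x y) ^ 2 ∂μ) * M0)
      (fun k => hw_sq_aesm k p) hbound_int
      (fun k => by
        filter_upwards [hwb k p] with x hx
        rwa [Real.norm_eq_abs, abs_of_nonneg (sq_nonneg _)])
      ?_
    · rwa [h0] at this
    · filter_upwards [hslice] with x hx
      have h1 := jac_weak_scalar hu hbdd hweak hx p
      have h2 : Tendsto (fun k => w k p x) atTop (nhds 0) := by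
        refine h1.congr fun k => ?_
        refine integral_congr_ae (Eventually.of_forall fun y => ?_)
        simp only [hgdef]; ring
      have := h2.mul h2
      rw [mul_zero] at this
      refine this.congr fun k => ?_
      ring
  -- rewrite the double integral
  have hBeq : ∀ k, (∫ x, (∫ y, A x y * frob (jac (u k) x) (jac (u k) y) ∂μ) ∂μ)
      = ∑ p : Fin n × Fin n, ∫ x, g k p x * w k p x ∂μ := by
    intro k
    have hinner : ∀ᵐ x ∂μ, (∫ y, A x y * frob (jac (u k) x) (jac (u k) y) ∂μ)
        = ∑ p : Fin n × Fin n, g k p x * w k p x := by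
      filter_upwards [hslice] with x hx
      have hint : ∀ p : Fin n × Fin n, Integrable (fun y => g k p x * (A x y * g k p y)) μ :=
        fun p => (memL2_integrable_mul hx (hgmem k p)).const_mul _
      calc (∫ y, A x y * frob (jac (u k) x) (jac (u k) y) ∂μ)
          = ∫ y, ∑ p : Fin n × Fin n, g k p x * (A x y * g k p y) ∂μ := by
            refine integral_congr_ae (Eventually.of_forall fun y => ?_)
            show A x y * frob (jac (u k) x) (jac (u k) y)
              = ∑ p : Fin n × Fin n, g k p x * (A x y * g k p y)
            rw [frob_eq_sum_prod, Finset.mul_sum]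
            exact Finset.sum_congr rfl fun p _ => by simp only [hgdef]; ring
        _ = ∑ p : Fin n × Fin n, ∫ y, g k p x * (A x y * g k p y) ∂μ :=
            integral_finset_sum _ fun p _ => hint p
        _ = ∑ p : Fin n × Fin n, g k p x * w k p x :=
            Finset.sum_congr rfl fun p _ => integral_const_mul _ _
    rw [integral_congr_ae hinner]
    exact integral_finset_sum _ fun p _ => memL2_integrable_mul (hgmem k p) (hwmem k p)
  -- final bound and squeeze
  have hBle : ∀ k, |∫ x, (∫ y, A x y * frob (jac (u k) x) (jac (u k) y) ∂μ) ∂μ|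
      ≤ ∑ p : Fin n × Fin n, Real.sqrt M0 * Real.sqrt (∫ x, (w k p x) ^ 2 ∂μ) := by
    intro k
    rw [hBeq k]
    refine le_trans (Finset.abs_sum_le_sum_abs _ _) (Finset.sum_le_sum fun p _ => ?_)
    refine le_trans (integral_cs (hgmem k p) (hwmem k p)) ?_
    refine mul_le_mul_of_nonneg_right ?_ (Real.sqrt_nonneg _)
    exact Real.sqrt_le_sqrt (hg2 k p)
  have hten : ∀ p : Fin n × Fin n, Tendsto
      (fun k => Real.sqrt M0 * Real.sqrt (∫ x, (w k p x) ^ 2 ∂μ)) atTop (nhds 0) := by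
    intro p
    have := ((hDCT p).sqrt).const_mul (Real.sqrt M0)
    rwa [Real.sqrt_zero, mul_zero] at this
  have htend : Tendsto (fun k => ∑ p : Fin n × Fin n,
      Real.sqrt M0 * Real.sqrt (∫ x, (w k p x) ^ 2 ∂μ)) atTop (nhds 0) := by
    have hsum := tendsto_finset_sum (Finset.univ : Finset (Fin n × Fin n)) fun p _ => hten p
    simpa using hsum
  refine squeeze_zero_norm (fun k => ?_) htend
  rw [Real.norm_eq_abs]
  exact hBle k
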